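/- arXiv:0911.2080 — 2 statements merged into one kernel-verified Lean document; each statement's English description precedes it below -/
import Mathlib

section
/- Let M be a connected smooth Banach manifold modeled on a Banach space E with a {1}-structure (η_v)_{v∈E}, and fix x₀ ∈ M. Let V := { ξ(x₀) : ξ an infinitesimal automorphism of (M,η) } ⊆ T_{x₀}M. Then the map β : V × V → V defined by β(ξ₁(x₀), ξ₂(x₀)) = [ξ₁, ξ₂](x₀) (which is well defined because infinitesimal automorphisms are determined by their value at x₀ and are closed under the Lie bracket) is continuous. Consequently the space of infinitesimal automorphisms, with the Banach space structure transported from the closed subspace V, is a Banach–Lie algebra. -/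
/-!
Work in the chart at `x₀`, writing `X̃` for the local representative of a vector field `X` and
`y₀` for the image of `x₀`. For an infinitesimal automorphism `ξ`, the relation `[ξ, η_v](x₀) = 0`
reads `Dξ̃(y₀)(η_v x₀) = Dη̃_v(y₀)(ξ x₀)`: the derivative of `ξ̃` at `y₀` along the frame is
determined by the value `ξ x₀`. Writing `ξᵢ x₀ = η_{vᵢ} x₀` with `vᵢ = e⁻¹(ξᵢ x₀)`, where
`e : v ↦ η_v x₀`, this gives `[ξ₁, ξ₂](x₀) = Dη̃_{v₁}(y₀)(ξ₂ x₀) - Dη̃_{v₂}(y₀)(ξ₁ x₀)`.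
The right-hand side is continuous in `(ξ₁ x₀, ξ₂ x₀)` since `(v, y) ↦ η̃_v y` is smooth, so that
`v ↦ Dη̃_v(y₀)` is continuous.
-/

open Set Bundle
open scoped Manifold

noncomputable section

/-- The pullback of a vector field under a map between manifolds (modeled on Banach
spaces with trivial models), obtained by applying the inverse of the derivative of the
map to the vector field at the image point.  (This is only meaningful when the
derivative is invertible, e.g. for the maps `extChartAt` used below.) -/
def mpullback {E F : Type*} [NormedAddCommGroup E] [NormedSpace ℝ E]
    [NormedAddCommGroup F] [NormedSpace ℝ F]
    {M N : Type*} [TopologicalSpace M] [ChartedSpace E M]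
    [TopologicalSpace N] [ChartedSpace F N]
    (f : M → N) (V : (y : N) → TangentSpace 𝓘(ℝ, F) y) (x : M) :
    TangentSpace 𝓘(ℝ, E) x :=
  (mfderiv 𝓘(ℝ, E) 𝓘(ℝ, F) f x).inverse (V (f x))

/-- The Lie bracket of two vector fields on a manifold modeled on a Banach space `E`
(with trivial, boundaryless model): push both vector fields forward to the model
space `E` using the preferred chart at `x₀` (equivalently, pull them back by the
inverse chart), take the usual Lie bracket
`[V, W](y) = DW(y)(V y) - DV(y)(W y)` of vector fields on `E`, and pull the result
back to the manifold. -/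
def mlieBracket {E : Type*} [NormedAddCommGroup E] [NormedSpace ℝ E]
    {M : Type*} [TopologicalSpace M] [ChartedSpace E M]
    (V W : (x : M) → TangentSpace 𝓘(ℝ, E) x) (x₀ : M) :
    TangentSpace 𝓘(ℝ, E) x₀ :=
  mpullback (extChartAt 𝓘(ℝ, E) x₀)
    (VectorField.lieBracket ℝ
      (mpullback (extChartAt 𝓘(ℝ, E) x₀).symm V)
      (mpullback (extChartAt 𝓘(ℝ, E) x₀).symm W)) x₀

structure IsOneStructure {E : Type*} [NormedAddCommGroup E] [NormedSpace ℝ E]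
    {M : Type*} [TopologicalSpace M] [ChartedSpace E M]
    [IsManifold 𝓘(ℝ, E) (⊤ : ℕ∞) M]
    (η : E → (x : M) → TangentSpace 𝓘(ℝ, E) x) : Prop where
  smooth : ContMDiff (𝓘(ℝ, E).prod 𝓘(ℝ, E)) 𝓘(ℝ, E).tangent (⊤ : ℕ∞)
    (fun p : E × M => (⟨p.2, η p.1 p.2⟩ : TangentBundle 𝓘(ℝ, E) M))
  linear : ∀ x : M, IsLinearMap ℝ (fun v : E => η v x)
  isom : ∀ x : M, ∃ e : E ≃L[ℝ] TangentSpace 𝓘(ℝ, E) x, ∀ v : E, e v = η v x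

def IsSmoothVectorField {E : Type*} [NormedAddCommGroup E] [NormedSpace ℝ E]
    {M : Type*} [TopologicalSpace M] [ChartedSpace E M]
    [IsManifold 𝓘(ℝ, E) (⊤ : ℕ∞) M]
    (ξ : (x : M) → TangentSpace 𝓘(ℝ, E) x) : Prop :=
  ContMDiff 𝓘(ℝ, E) 𝓘(ℝ, E).tangent (⊤ : ℕ∞)
    (fun x : M => (⟨x, ξ x⟩ : TangentBundle 𝓘(ℝ, E) M))

def IsInfinitesimalAutomorphism {E : Type*} [NormedAddCommGroup E] [NormedSpace ℝ E]
    {M : Type*} [TopologicalSpace M] [ChartedSpace E M]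
    [IsManifold 𝓘(ℝ, E) (⊤ : ℕ∞) M]
    (η : E → (x : M) → TangentSpace 𝓘(ℝ, E) x)
    (ξ : (x : M) → TangentSpace 𝓘(ℝ, E) x) : Prop :=
  IsSmoothVectorField ξ ∧ ∀ (v : E) (x : M), mlieBracket ξ (η v) x = 0

section ChartRepresentation

variable {E : Type*} [NormedAddCommGroup E] [NormedSpace ℝ E]
  {M : Type*} [TopologicalSpace M] [ChartedSpace E M] [IsManifold 𝓘(ℝ, E) 1 M]

def chartRep (x₀ : M) (X : (x : M) → TangentSpace 𝓘(ℝ, E) x) : E → E :=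
  fun y => mpullback (extChartAt 𝓘(ℝ, E) x₀).symm X y

lemma chartRep_apply (x₀ : M) (X : (x : M) → TangentSpace 𝓘(ℝ, E) x)
    {y : E} (hy : y ∈ (extChartAt 𝓘(ℝ, E) x₀).target) :
    chartRep x₀ X y =
      tangentCoordChange 𝓘(ℝ, E) ((extChartAt 𝓘(ℝ, E) x₀).symm y) x₀
        ((extChartAt 𝓘(ℝ, E) x₀).symm y) (X ((extChartAt 𝓘(ℝ, E) x₀).symm y)) := by
  set x := (extChartAt 𝓘(ℝ, E) x₀).symm y
  have hx : x ∈ (chartAt E x₀).source := by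
    rw [← extChartAt_source 𝓘(ℝ, E)]
    exact (extChartAt 𝓘(ℝ, E) x₀).map_target hy
  have hright : mfderiv 𝓘(ℝ, E) 𝓘(ℝ, E) (extChartAt 𝓘(ℝ, E) x₀) x ∘L
      mfderiv 𝓘(ℝ, E) 𝓘(ℝ, E) (extChartAt 𝓘(ℝ, E) x₀).symm y = ContinuousLinearMap.id ℝ E := by
    have := mfderiv_extChartAt_comp_mfderivWithin_extChartAt_symm (I := 𝓘(ℝ, E)) hy
    rwa [ModelWithCorners.range_eq_univ, mfderivWithin_univ] at this
  have hleft : mfderiv 𝓘(ℝ, E) 𝓘(ℝ, E) (extChartAt 𝓘(ℝ, E) x₀).symm y ∘L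
      mfderiv 𝓘(ℝ, E) 𝓘(ℝ, E) (extChartAt 𝓘(ℝ, E) x₀) x = ContinuousLinearMap.id ℝ E := by
    have := mfderivWithin_extChartAt_symm_comp_mfderiv_extChartAt (I := 𝓘(ℝ, E)) hy
    rwa [ModelWithCorners.range_eq_univ, mfderivWithin_univ] at this
  have hchart : mfderiv 𝓘(ℝ, E) 𝓘(ℝ, E) (extChartAt 𝓘(ℝ, E) x₀) x =
      tangentCoordChange 𝓘(ℝ, E) x x₀ x := by
    rw [(hasMFDerivAt_extChartAt hx).mfderiv]
    exact mfderiv_chartAt_eq_tangentCoordChange hx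
  rw [chartRep, mpullback, ContinuousLinearMap.inverse_eq hleft hright, hchart]
  rfl

lemma chartRep_apply_self (x₀ : M) (X : (x : M) → TangentSpace 𝓘(ℝ, E) x) :
    chartRep x₀ X (extChartAt 𝓘(ℝ, E) x₀ x₀) = X x₀ := by
  rw [chartRep_apply x₀ X (mem_extChartAt_target x₀), extChartAt_to_inv]
  exact tangentCoordChange_self (mem_extChartAt_source x₀)

lemma mlieBracket_eq_fderiv_chartRep_sub (x₀ : M) (X Y : (x : M) → TangentSpace 𝓘(ℝ, E) x) :
    mlieBracket X Y x₀ =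
      fderiv ℝ (chartRep x₀ Y) (extChartAt 𝓘(ℝ, E) x₀ x₀) (X x₀) -
        fderiv ℝ (chartRep x₀ X) (extChartAt 𝓘(ℝ, E) x₀ x₀) (Y x₀) := by
  rw [← chartRep_apply_self x₀ X, ← chartRep_apply_self x₀ Y]
  have hinv : (mfderiv 𝓘(ℝ, E) 𝓘(ℝ, E) (extChartAt 𝓘(ℝ, E) x₀) x₀).inverse =
      ContinuousLinearMap.id ℝ E := by
    rw [mfderiv_extChartAt_self]
    exact ContinuousLinearMap.inverse_id
  unfold mlieBracket mpullback
  rw [hinv]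
  rfl

end ChartRepresentation

section SmoothFamily

variable {E : Type*} [NormedAddCommGroup E] [NormedSpace ℝ E]
  {F : Type*} [NormedAddCommGroup F] [NormedSpace ℝ F]
  {M : Type*} [TopologicalSpace M] [ChartedSpace E M] [IsManifold 𝓘(ℝ, E) (⊤ : ℕ∞) M]
  {η : F → (x : M) → TangentSpace 𝓘(ℝ, E) x}

lemma contDiffAt_chartRep_family (x₀ : M)
    (hη : ContMDiff (𝓘(ℝ, F).prod 𝓘(ℝ, E)) 𝓘(ℝ, E).tangent (⊤ : ℕ∞)
      (fun p : F × M => (⟨p.2, η p.1 p.2⟩ : TangentBundle 𝓘(ℝ, E) M)))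
    {v : F} {y : E} (hy : y ∈ (extChartAt 𝓘(ℝ, E) x₀).target) :
    ContDiffAt ℝ ((⊤ : ℕ∞) : WithTop ℕ∞) (fun p : F × E => chartRep x₀ (η p.1) p.2) (v, y) := by
  set φ := extChartAt 𝓘(ℝ, E) x₀
  have hx : φ.symm y ∈ (chartAt E x₀).source := by
    rw [← extChartAt_source 𝓘(ℝ, E)]
    exact φ.map_target hy
  have hsymm : ContMDiffAt 𝓘(ℝ, E) 𝓘(ℝ, E) (⊤ : ℕ∞) φ.symm y :=
    (contMDiffOn_extChartAt_symm x₀ y hy).contMDiffAt ((isOpen_extChartAt_target x₀).mem_nhds hy)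
  have hlift : ContMDiffAt (𝓘(ℝ, F).prod 𝓘(ℝ, E)) 𝓘(ℝ, E).tangent (⊤ : ℕ∞)
      (fun p : F × E => (⟨φ.symm p.2, η p.1 (φ.symm p.2)⟩ : TangentBundle 𝓘(ℝ, E) M)) (v, y) :=
    hη.contMDiffAt.comp (v, y) (contMDiffAt_fst.prodMk (hsymm.comp (v, y) contMDiffAt_snd))
  -- the fibre coordinate of the lift in the trivialization at `x₀` is `chartRep` on `F × target`
  have hcoord := (((trivializationAt E (TangentSpace 𝓘(ℝ, E)) x₀).contMDiffAt_iff
      (f := fun p : F × E => (⟨φ.symm p.2, η p.1 (φ.symm p.2)⟩ : TangentBundle 𝓘(ℝ, E) M))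
      (x₀ := (v, y)) ((trivializationAt E (TangentSpace 𝓘(ℝ, E)) x₀).mem_source.2 hx)).1 hlift).2
  rw [← modelWithCornersSelf_prod, chartedSpaceSelf_prod] at hcoord
  refine hcoord.contDiffAt.congr_of_eventuallyEq ?_
  filter_upwards [(isOpen_extChartAt_target x₀).preimage continuous_snd |>.mem_nhds hy]
    with p hp
  exact chartRep_apply x₀ (η p.1) hp

lemma continuous_fderiv_chartRep_family (x₀ : M)
    (hη : ContMDiff (𝓘(ℝ, F).prod 𝓘(ℝ, E)) 𝓘(ℝ, E).tangent (⊤ : ℕ∞)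
      (fun p : F × M => (⟨p.2, η p.1 p.2⟩ : TangentBundle 𝓘(ℝ, E) M))) :
    Continuous fun v : F => fderiv ℝ (chartRep x₀ (η v)) (extChartAt 𝓘(ℝ, E) x₀ x₀) :=
  continuous_iff_continuousAt.2 fun _ =>
    (ContDiffAt.fderiv (contDiffAt_chartRep_family x₀ hη (mem_extChartAt_target x₀))
      contDiffAt_const (m := 0) (by exact_mod_cast le_top)).continuousAt

end SmoothFamily

section InfinitesimalAutomorphism

variable {E : Type*} [NormedAddCommGroup E] [NormedSpace ℝ E]
  {M : Type*} [TopologicalSpace M] [ChartedSpace E M] [IsManifold 𝓘(ℝ, E) (⊤ : ℕ∞) M]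
  {η : E → (x : M) → TangentSpace 𝓘(ℝ, E) x} {ξ ξ₁ ξ₂ : (x : M) → TangentSpace 𝓘(ℝ, E) x}

lemma IsInfinitesimalAutomorphism.fderiv_chartRep_apply (hξ : IsInfinitesimalAutomorphism η ξ)
    (x₀ : M) (v : E) :
    fderiv ℝ (chartRep x₀ ξ) (extChartAt 𝓘(ℝ, E) x₀ x₀) (η v x₀) =
      fderiv ℝ (chartRep x₀ (η v)) (extChartAt 𝓘(ℝ, E) x₀ x₀) (ξ x₀) := by
  have hbracket := hξ.2 v x₀
  rw [mlieBracket_eq_fderiv_chartRep_sub] at hbracket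
  exact (eq_of_sub_eq_zero hbracket).symm

lemma IsInfinitesimalAutomorphism.mlieBracket_eq (hξ₁ : IsInfinitesimalAutomorphism η ξ₁)
    (hξ₂ : IsInfinitesimalAutomorphism η ξ₂) {x₀ : M} {v₁ v₂ : E}
    (h₁ : ξ₁ x₀ = η v₁ x₀) (h₂ : ξ₂ x₀ = η v₂ x₀) :
    mlieBracket ξ₁ ξ₂ x₀ =
      fderiv ℝ (chartRep x₀ (η v₁)) (extChartAt 𝓘(ℝ, E) x₀ x₀) (ξ₂ x₀) -
        fderiv ℝ (chartRep x₀ (η v₂)) (extChartAt 𝓘(ℝ, E) x₀ x₀) (ξ₁ x₀) := by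
  rw [mlieBracket_eq_fderiv_chartRep_sub, ← hξ₂.fderiv_chartRep_apply, ← hξ₁.fderiv_chartRep_apply,
    ← h₁, ← h₂]

end InfinitesimalAutomorphism

theorem bracket_continuous_on_values_of_infinitesimal_automorphisms_general
    {E : Type*} [NormedAddCommGroup E] [NormedSpace ℝ E]
    {M : Type*} [TopologicalSpace M] [ChartedSpace E M]
    [IsManifold 𝓘(ℝ, E) (⊤ : ℕ∞) M]
    (η : E → (x : M) → TangentSpace 𝓘(ℝ, E) x) (hη : IsOneStructure η)
    (x₀ : M)
    (V : Set (TangentSpace 𝓘(ℝ, E) x₀))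
    (hV : V = {w : TangentSpace 𝓘(ℝ, E) x₀ |
      ∃ ξ : (x : M) → TangentSpace 𝓘(ℝ, E) x,
        IsInfinitesimalAutomorphism η ξ ∧ ξ x₀ = w})
    (β : TangentSpace 𝓘(ℝ, E) x₀ → TangentSpace 𝓘(ℝ, E) x₀ → TangentSpace 𝓘(ℝ, E) x₀)
    (hβ : ∀ ξ₁ ξ₂ : (x : M) → TangentSpace 𝓘(ℝ, E) x,
      IsInfinitesimalAutomorphism η ξ₁ → IsInfinitesimalAutomorphism η ξ₂ →
        β (ξ₁ x₀) (ξ₂ x₀) = mlieBracket ξ₁ ξ₂ x₀) :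
    ContinuousOn (fun p : TangentSpace 𝓘(ℝ, E) x₀ × TangentSpace 𝓘(ℝ, E) x₀ =>
      β p.1 p.2) (V ×ˢ V) := by
  obtain ⟨e, he⟩ := hη.isom x₀
  set D := fun v : E => fderiv ℝ (chartRep x₀ (η v)) (extChartAt 𝓘(ℝ, E) x₀ x₀)
  have hD : Continuous D := continuous_fderiv_chartRep_family x₀ hη.smooth
  have hframe : ∀ w : TangentSpace 𝓘(ℝ, E) x₀, w = η (e.symm w) x₀ := fun w => by
    rw [← he, e.apply_symm_apply]
  refine ContinuousOn.congr (f := fun p => D (e.symm p.1) p.2 - D (e.symm p.2) p.1) ?_ ?_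
  · exact Continuous.continuousOn <|
      ((hD.comp (e.symm.continuous.comp continuous_fst)).clm_apply continuous_snd).sub
        ((hD.comp (e.symm.continuous.comp continuous_snd)).clm_apply continuous_fst)
  · rintro ⟨w₁, w₂⟩ ⟨hw₁, hw₂⟩
    rw [hV] at hw₁ hw₂
    obtain ⟨ξ₁, hξ₁, rfl⟩ := hw₁
    obtain ⟨ξ₂, hξ₂, rfl⟩ := hw₂
    exact (hβ ξ₁ ξ₂ hξ₁ hξ₂).trans (hξ₁.mlieBracket_eq hξ₂ (hframe _) (hframe _))

theorem bracket_continuous_on_values_of_infinitesimal_automorphisms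
    {E : Type*} [NormedAddCommGroup E] [NormedSpace ℝ E] [CompleteSpace E]
    {M : Type*} [TopologicalSpace M] [ChartedSpace E M]
    [IsManifold 𝓘(ℝ, E) (⊤ : ℕ∞) M] [ConnectedSpace M]
    (η : E → (x : M) → TangentSpace 𝓘(ℝ, E) x) (hη : IsOneStructure η)
    (x₀ : M)
    (V : Set (TangentSpace 𝓘(ℝ, E) x₀))
    (hV : V = {w : TangentSpace 𝓘(ℝ, E) x₀ |
      ∃ ξ : (x : M) → TangentSpace 𝓘(ℝ, E) x,
        IsInfinitesimalAutomorphism η ξ ∧ ξ x₀ = w})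
    (β : TangentSpace 𝓘(ℝ, E) x₀ → TangentSpace 𝓘(ℝ, E) x₀ → TangentSpace 𝓘(ℝ, E) x₀)
    (hβ : ∀ ξ₁ ξ₂ : (x : M) → TangentSpace 𝓘(ℝ, E) x,
      IsInfinitesimalAutomorphism η ξ₁ → IsInfinitesimalAutomorphism η ξ₂ →
        β (ξ₁ x₀) (ξ₂ x₀) = mlieBracket ξ₁ ξ₂ x₀) :
    ContinuousOn (fun p : TangentSpace 𝓘(ℝ, E) x₀ × TangentSpace 𝓘(ℝ, E) x₀ =>
      β p.1 p.2) (V ×ˢ V) :=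
  bracket_continuous_on_values_of_infinitesimal_automorphisms_general η hη x₀ V hV β hβ
end
end

section
/- Let M be a connected smooth Banach manifold modeled on a Banach space E with a {1}-structure (η_v)_{v∈E}, and suppose that each vector field η_v (v ∈ E) is complete. Then every infinitesimal automorphism of (M,η) is complete: for every smooth vector field ξ on M with [ξ, η_v] = 0 for all v ∈ E and every x ∈ M, there exists a curve γ : ℝ → M with γ(0) = x that is an integral curve of ξ on all of ℝ. -/
/-!
Given `x`, pick `v` with `η v x = ξ x` and an integral curve `γ : ℝ → M` of `η v` through `x`.
In a chart, `g t = ξ (γ t) - η v (γ t)` satisfies the linear ODE `g' = D(η v)(γ t) g` because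
`[ξ, η v] = 0`, so by uniqueness the set `{t | ξ (γ t) = η v (γ t)}` is open; its complement is
open by continuity. Hence `ξ = η v` along all of `γ`, and `γ` is an integral curve of `ξ`.
-/

open Set Bundle
open scoped Manifold

noncomputable section

/-- A vector field is complete if through every point there is an integral curve
defined on all of `ℝ`. -/
def IsCompleteVectorField {E : Type*} [NormedAddCommGroup E] [NormedSpace ℝ E]
    {M : Type*} [TopologicalSpace M] [ChartedSpace E M]
    [IsManifold 𝓘(ℝ, E) (⊤ : ℕ∞) M]
    (ξ : (x : M) → TangentSpace 𝓘(ℝ, E) x) : Prop :=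
  ∀ x : M, ∃ γ : ℝ → M, γ 0 = x ∧ IsMIntegralCurve γ ξ


open VectorField Filter Topology

section ModelSpace

variable {E : Type*} [NormedAddCommGroup E] [NormedSpace ℝ E]

theorem eventuallyEq_zero_of_hasDerivAt_clm_apply {A : ℝ → E →L[ℝ] E} {g : ℝ → E} {t₀ : ℝ}
    (hA : ContinuousAt A t₀) (hg : ∀ᶠ t in 𝓝 t₀, HasDerivAt g (A t (g t)) t) (h₀ : g t₀ = 0) :
    g =ᶠ[𝓝 t₀] 0 := by
  have hbound : ∀ᶠ t in 𝓝 t₀, ‖A t‖₊ < ‖A t₀‖₊ + 1 :=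
    hA.nnnorm.eventually (gt_mem_nhds (lt_add_one _))
  refine ODE_solution_unique_of_eventually (K := ‖A t₀‖₊ + 1) (s := fun _ ↦ univ) ?_
    (hg.mono fun t ht ↦ ⟨ht, mem_univ _⟩)
    (Eventually.of_forall fun t ↦ ⟨by simp, mem_univ _⟩) h₀
  exact hbound.mono fun t ht ↦ ((A t).lipschitz.weaken ht.le).lipschitzOnWith

variable {X Y : E → E} {y : ℝ → E} {t : ℝ}

theorem hasDerivAt_sub_of_lieBracket_eq_zero (hX : DifferentiableAt ℝ X (y t))
    (hY : DifferentiableAt ℝ Y (y t)) (hXY : lieBracket ℝ X Y (y t) = 0)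
    (hy : HasDerivAt y (Y (y t)) t) :
    HasDerivAt (fun s ↦ X (y s) - Y (y s)) (fderiv ℝ Y (y t) (X (y t) - Y (y t))) t := by
  rw [lieBracket_eq, sub_eq_zero] at hXY
  rw [map_sub, hXY]
  exact (hX.hasFDerivAt.comp_hasDerivAt t hy).sub (hY.hasFDerivAt.comp_hasDerivAt t hy)

theorem eventually_apply_eq_of_lieBracket_eq_zero {t₀ : ℝ}
    (hX : ContDiffAt ℝ 1 X (y t₀)) (hY : ContDiffAt ℝ 1 Y (y t₀))
    (hXY : lieBracket ℝ X Y =ᶠ[𝓝 (y t₀)] 0)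
    (hy : ∀ᶠ t in 𝓝 t₀, HasDerivAt y (Y (y t)) t) (h₀ : X (y t₀) = Y (y t₀)) :
    ∀ᶠ t in 𝓝 t₀, X (y t) = Y (y t) := by
  have hyc : ContinuousAt y t₀ := hy.self_of_nhds.continuousAt
  have hA : ContinuousAt (fun t ↦ fderiv ℝ Y (y t)) t₀ :=
    (hY.fderiv_right (m := 0) (zero_add 1).le).continuousAt.comp hyc
  have hsmooth : ∀ᶠ z in 𝓝 (y t₀), DifferentiableAt ℝ X z ∧ DifferentiableAt ℝ Y z ∧
      lieBracket ℝ X Y z = 0 :=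
    ((hX.eventually (by simp)).and ((hY.eventually (by simp)).and hXY)).mono fun z hz ↦
      ⟨hz.1.differentiableAt one_ne_zero, hz.2.1.differentiableAt one_ne_zero, hz.2.2⟩
  have hdiff := eventuallyEq_zero_of_hasDerivAt_clm_apply hA
    (((hyc.eventually hsmooth).and hy).mono fun t ⟨⟨hXt, hYt, hXYt⟩, hyt⟩ ↦
      hasDerivAt_sub_of_lieBracket_eq_zero hXt hYt hXYt hyt) (sub_eq_zero.mpr h₀)
  exact hdiff.mono fun t ht ↦ sub_eq_zero.mp ht

end ModelSpace

theorem mlieBracket_eq_vectorField_mlieBracket {E : Type*} [NormedAddCommGroup E]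
    [NormedSpace ℝ E] {M : Type*} [TopologicalSpace M] [ChartedSpace E M]
    (V W : (x : M) → TangentSpace 𝓘(ℝ, E) x) :
    _root_.mlieBracket V W = VectorField.mlieBracket 𝓘(ℝ, E) V W := by
  ext x
  rw [← mlieBracketWithin_univ, mlieBracketWithin_apply]
  simp only [ModelWithCorners.range_eq_univ, mpullbackWithin_univ, preimage_univ, univ_inter]
  exact congrArg _ (congrFun lieBracketWithin_univ _).symm

section Chart

variable {E : Type*} [NormedAddCommGroup E] [NormedSpace ℝ E]
  {M : Type*} [TopologicalSpace M] [ChartedSpace E M]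
  {V W : (x : M) → TangentSpace 𝓘(ℝ, E) x} {p q : M}

theorem mfderiv_extChartAt_symm_eq_mfderivWithin (p : M) (z : E) :
    mfderiv 𝓘(ℝ, E) 𝓘(ℝ, E) (extChartAt 𝓘(ℝ, E) p).symm z =
      mfderivWithin 𝓘(ℝ, E) 𝓘(ℝ, E) (extChartAt 𝓘(ℝ, E) p).symm (range 𝓘(ℝ, E)) z := by
  rw [ModelWithCorners.range_eq_univ, mfderivWithin_univ]

theorem mpullback_extChartAt_symm_apply [IsManifold 𝓘(ℝ, E) 1 M]
    (hq : q ∈ (extChartAt 𝓘(ℝ, E) p).source) :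
    VectorField.mpullback 𝓘(ℝ, E) 𝓘(ℝ, E) (extChartAt 𝓘(ℝ, E) p).symm V
        (extChartAt 𝓘(ℝ, E) p q) =
      mfderiv 𝓘(ℝ, E) 𝓘(ℝ, E) (extChartAt 𝓘(ℝ, E) p) q (V q) := by
  have hinv := isInvertible_mfderivWithin_extChartAt_symm ((extChartAt 𝓘(ℝ, E) p).map_source hq)
  have hcomp := mfderivWithin_extChartAt_symm_comp_mfderiv_extChartAt' hq
  rw [← mfderiv_extChartAt_symm_eq_mfderivWithin] at hinv hcomp
  rw [mpullback_apply]
  refine hinv.inverse_apply_eq.mpr ?_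
  have hVq : V ((extChartAt 𝓘(ℝ, E) p).symm (extChartAt 𝓘(ℝ, E) p q)) = V q := by
    rw [(extChartAt 𝓘(ℝ, E) p).left_inv hq]
  exact hVq.trans (DFunLike.congr_fun hcomp (V q)).symm

theorem mpullback_extChartAt_symm_apply_eq_iff [IsManifold 𝓘(ℝ, E) 1 M]
    (hq : q ∈ (extChartAt 𝓘(ℝ, E) p).source) :
    VectorField.mpullback 𝓘(ℝ, E) 𝓘(ℝ, E) (extChartAt 𝓘(ℝ, E) p).symm V
        (extChartAt 𝓘(ℝ, E) p q) =
      VectorField.mpullback 𝓘(ℝ, E) 𝓘(ℝ, E) (extChartAt 𝓘(ℝ, E) p).symm W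
        (extChartAt 𝓘(ℝ, E) p q) ↔ V q = W q := by
  rw [mpullback_extChartAt_symm_apply hq, mpullback_extChartAt_symm_apply hq]
  exact (isInvertible_mfderiv_extChartAt hq).injective.eq_iff

theorem IsMIntegralCurve.eventually_hasDerivAt_mpullback_extChartAt_symm
    [IsManifold 𝓘(ℝ, E) 1 M] {γ : ℝ → M}
    (hγ : IsMIntegralCurve γ W) (t₀ : ℝ) :
    ∀ᶠ t in 𝓝 t₀, HasDerivAt (extChartAt 𝓘(ℝ, E) (γ t₀) ∘ γ)
      (VectorField.mpullback 𝓘(ℝ, E) 𝓘(ℝ, E) (extChartAt 𝓘(ℝ, E) (γ t₀)).symm W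
        (extChartAt 𝓘(ℝ, E) (γ t₀) (γ t))) t := by
  filter_upwards [(hγ.isMIntegralCurveAt t₀).eventually_hasDerivAt,
    hγ.continuous.continuousAt.preimage_mem_nhds
      (extChartAt_source_mem_nhds (I := 𝓘(ℝ, E)) (γ t₀))] with t ht hsrc
  have hsrc' : γ t ∈ (chartAt E (γ t₀)).source := by rwa [← extChartAt_source 𝓘(ℝ, E)]
  rwa [mpullback_extChartAt_symm_apply hsrc, (hasMFDerivAt_extChartAt hsrc').mfderiv,
    mfderiv_chartAt_eq_tangentCoordChange hsrc']

section

variable [IsManifold 𝓘(ℝ, E) 2 M] [CompleteSpace E]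

theorem contDiffAt_mpullback_extChartAt_symm
    (hV : ContMDiffAt 𝓘(ℝ, E) 𝓘(ℝ, E).tangent 1 (T% V) p) :
    ContDiffAt ℝ 1 (VectorField.mpullback 𝓘(ℝ, E) 𝓘(ℝ, E) (extChartAt 𝓘(ℝ, E) p).symm V)
      (extChartAt 𝓘(ℝ, E) p p) := by
  have hsymm : ContMDiffAt 𝓘(ℝ, E) 𝓘(ℝ, E) 2 (extChartAt 𝓘(ℝ, E) p).symm
      (extChartAt 𝓘(ℝ, E) p p) :=
    (contMDiffOn_extChartAt_symm p).contMDiffAt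
      ((isOpen_extChartAt_target p).mem_nhds (mem_extChartAt_target p))
  have hinv :=
    isInvertible_mfderivWithin_extChartAt_symm (mem_extChartAt_target (I := 𝓘(ℝ, E)) p)
  rw [← mfderiv_extChartAt_symm_eq_mfderivWithin] at hinv
  rw [← contMDiffAt_vectorSpace_iff_contDiffAt]
  exact ContMDiffAt.mpullback_vectorField_preimage (by rwa [extChartAt_to_inv]) hsymm hinv le_rfl

theorem lieBracket_mpullback_extChartAt_symm_eq_zero
    (hV : MDifferentiable 𝓘(ℝ, E) 𝓘(ℝ, E).tangent (T% V))
    (hW : MDifferentiable 𝓘(ℝ, E) 𝓘(ℝ, E).tangent (T% W))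
    (hVW : VectorField.mlieBracket 𝓘(ℝ, E) V W = 0) {z : E}
    (hz : z ∈ (extChartAt 𝓘(ℝ, E) p).target) :
    lieBracket ℝ (VectorField.mpullback 𝓘(ℝ, E) 𝓘(ℝ, E) (extChartAt 𝓘(ℝ, E) p).symm V)
      (VectorField.mpullback 𝓘(ℝ, E) 𝓘(ℝ, E) (extChartAt 𝓘(ℝ, E) p).symm W) z = 0 := by
  have : IsManifold 𝓘(ℝ, E) (minSmoothness ℝ 2) M := by
    rw [minSmoothness_of_isRCLikeNormedField]; infer_instance
  have hsymm : ContMDiffAt 𝓘(ℝ, E) 𝓘(ℝ, E) (minSmoothness ℝ 2) (extChartAt 𝓘(ℝ, E) p).symm z :=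
    (contMDiffOn_extChartAt_symm p).contMDiffAt ((isOpen_extChartAt_target p).mem_nhds hz)
  have h := mpullback_mlieBracket (hV _) (hW _) hsymm le_rfl
  rw [hVW, mpullback_zero, ← mlieBracketWithin_univ, mlieBracketWithin_eq_lieBracketWithin] at h
  exact (congrFun lieBracketWithin_univ z).symm.trans h.symm

end

end Chart

section IntegralCurve

variable {E : Type*} [NormedAddCommGroup E] [NormedSpace ℝ E] [CompleteSpace E]
  {M : Type*} [TopologicalSpace M] [ChartedSpace E M] [IsManifold 𝓘(ℝ, E) 2 M]
  {V W : (x : M) → TangentSpace 𝓘(ℝ, E) x} {γ : ℝ → M}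

theorem IsMIntegralCurve.eventually_apply_eq_iff_of_mlieBracket_eq_zero
    (hV : ContMDiff 𝓘(ℝ, E) 𝓘(ℝ, E).tangent 1 (T% V))
    (hW : ContMDiff 𝓘(ℝ, E) 𝓘(ℝ, E).tangent 1 (T% W))
    (hVW : VectorField.mlieBracket 𝓘(ℝ, E) V W = 0) (hγ : IsMIntegralCurve γ W) (t₀ : ℝ) :
    ∀ᶠ t in 𝓝 t₀, (V (γ t) = W (γ t) ↔ V (γ t₀) = W (γ t₀)) := by
  set φ := extChartAt 𝓘(ℝ, E) (γ t₀)
  set X := VectorField.mpullback 𝓘(ℝ, E) 𝓘(ℝ, E) φ.symm V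
  set Y := VectorField.mpullback 𝓘(ℝ, E) 𝓘(ℝ, E) φ.symm W
  have hsrc : ∀ᶠ t in 𝓝 t₀, γ t ∈ φ.source :=
    hγ.continuous.continuousAt.preimage_mem_nhds (extChartAt_source_mem_nhds (γ t₀))
  have hX : ContDiffAt ℝ 1 X (φ (γ t₀)) := contDiffAt_mpullback_extChartAt_symm (hV _)
  have hY : ContDiffAt ℝ 1 Y (φ (γ t₀)) := contDiffAt_mpullback_extChartAt_symm (hW _)
  have hiff₀ :=
    mpullback_extChartAt_symm_apply_eq_iff (V := V) (W := W) (mem_extChartAt_source (γ t₀))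
  by_cases h₀ : V (γ t₀) = W (γ t₀)
  · have hXY : lieBracket ℝ X Y =ᶠ[𝓝 (φ (γ t₀))] 0 :=
      eventually_of_mem ((isOpen_extChartAt_target _).mem_nhds (mem_extChartAt_target _))
        fun z hz ↦ lieBracket_mpullback_extChartAt_symm_eq_zero (hV.mdifferentiable one_ne_zero)
          (hW.mdifferentiable one_ne_zero) hVW hz
    filter_upwards [hsrc, eventually_apply_eq_of_lieBracket_eq_zero (y := φ ∘ γ) hX hY hXY
      (hγ.eventually_hasDerivAt_mpullback_extChartAt_symm t₀) (hiff₀.mpr h₀)] with t ht hXYt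
    exact iff_of_true ((mpullback_extChartAt_symm_apply_eq_iff ht).mp hXYt) h₀
  · have hcont : ContinuousAt (fun t ↦ X (φ (γ t)) - Y (φ (γ t))) t₀ :=
      (hX.continuousAt.sub hY.continuousAt).comp (f := φ ∘ γ)
        ((continuousAt_extChartAt (γ t₀)).comp hγ.continuous.continuousAt)
    filter_upwards [hsrc, hcont.eventually_ne (sub_ne_zero.mpr (mt hiff₀.mp h₀))] with t ht hne
    exact iff_of_false
      (mt (mpullback_extChartAt_symm_apply_eq_iff ht).mpr (sub_ne_zero.mp hne)) h₀

theorem IsMIntegralCurve.of_mlieBracket_eq_zero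
    (hV : ContMDiff 𝓘(ℝ, E) 𝓘(ℝ, E).tangent 1 (T% V))
    (hW : ContMDiff 𝓘(ℝ, E) 𝓘(ℝ, E).tangent 1 (T% W))
    (hVW : VectorField.mlieBracket 𝓘(ℝ, E) V W = 0) (hγ : IsMIntegralCurve γ W) {t₀ : ℝ}
    (h₀ : V (γ t₀) = W (γ t₀)) : IsMIntegralCurve γ V := by
  have hconst : IsLocallyConstant fun t ↦ V (γ t) = W (γ t) :=
    (IsLocallyConstant.iff_eventually_eq _).mpr fun t ↦
      (hγ.eventually_apply_eq_iff_of_mlieBracket_eq_zero hV hW hVW t).mono fun _ h ↦ propext h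
  intro t
  rw [show V (γ t) = W (γ t) from hconst.apply_eq_of_preconnectedSpace t₀ t ▸ h₀]
  exact hγ t

end IntegralCurve

namespace IsOneStructure

variable {E : Type*} [NormedAddCommGroup E] [NormedSpace ℝ E]
  {M : Type*} [TopologicalSpace M] [ChartedSpace E M] [IsManifold 𝓘(ℝ, E) (⊤ : ℕ∞) M]
  {η : E → (x : M) → TangentSpace 𝓘(ℝ, E) x}

theorem isSmoothVectorField (hη : IsOneStructure η) (v : E) : IsSmoothVectorField (η v) :=
  hη.smooth.comp (contMDiff_const.prodMk contMDiff_id)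

theorem exists_apply_eq (hη : IsOneStructure η) (x : M) (w : TangentSpace 𝓘(ℝ, E) x) :
    ∃ v, η v x = w := by
  obtain ⟨e, he⟩ := hη.isom x
  exact ⟨e.symm w, by rw [← he, e.apply_symm_apply]⟩

end IsOneStructure

theorem IsSmoothVectorField.contMDiff_one {E : Type*} [NormedAddCommGroup E] [NormedSpace ℝ E]
    {M : Type*} [TopologicalSpace M] [ChartedSpace E M] [IsManifold 𝓘(ℝ, E) (⊤ : ℕ∞) M]
    {V : (x : M) → TangentSpace 𝓘(ℝ, E) x} (hV : IsSmoothVectorField V) :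
    ContMDiff 𝓘(ℝ, E) 𝓘(ℝ, E).tangent 1 (T% V) :=
  hV.of_le (by exact_mod_cast le_top)

theorem infinitesimal_automorphisms_complete_general
    {E : Type*} [NormedAddCommGroup E] [NormedSpace ℝ E] [CompleteSpace E]
    {M : Type*} [TopologicalSpace M] [ChartedSpace E M]
    [IsManifold 𝓘(ℝ, E) (⊤ : ℕ∞) M]
    (η : E → (x : M) → TangentSpace 𝓘(ℝ, E) x) (hη : IsOneStructure η)
    (hcomplete : ∀ v : E, IsCompleteVectorField (η v))
    (ξ : (x : M) → TangentSpace 𝓘(ℝ, E) x)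
    (hξ : IsInfinitesimalAutomorphism η ξ) :
    IsCompleteVectorField ξ := by
  intro x
  obtain ⟨v, hv⟩ := hη.exists_apply_eq x (ξ x)
  obtain ⟨γ, hγ₀, hγ⟩ := hcomplete v x
  have hbracket : VectorField.mlieBracket 𝓘(ℝ, E) ξ (η v) = 0 := by
    rw [← mlieBracket_eq_vectorField_mlieBracket]
    exact funext (hξ.2 v)
  refine ⟨γ, hγ₀, hγ.of_mlieBracket_eq_zero hξ.1.contMDiff_one
    (hη.isSmoothVectorField v).contMDiff_one hbracket (t₀ := 0) ?_⟩
  rw [hγ₀, hv]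

theorem infinitesimal_automorphisms_complete
    {E : Type*} [NormedAddCommGroup E] [NormedSpace ℝ E] [CompleteSpace E]
    {M : Type*} [TopologicalSpace M] [ChartedSpace E M]
    [IsManifold 𝓘(ℝ, E) (⊤ : ℕ∞) M] [ConnectedSpace M]
    (η : E → (x : M) → TangentSpace 𝓘(ℝ, E) x) (hη : IsOneStructure η)
    (hcomplete : ∀ v : E, IsCompleteVectorField (η v))
    (ξ : (x : M) → TangentSpace 𝓘(ℝ, E) x)
    (hξ : IsInfinitesimalAutomorphism η ξ) :
    IsCompleteVectorField ξ :=
  infinitesimal_automorphisms_complete_general η hη hcomplete ξ hξ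
end
end
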